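/- For 0 < i < n and 0 ≤ s ≤ n, the intersection of the face σ(s) = Δ^{I(s)} with the subcomplex Ω(Δ^1 × Λ^n_i ∪ ∂Δ^1 × Δ^n) ∪ ⋃_{s < r ≤ n} σ(r) of Ω^n equals the generalized horn Λ^{I(s)}_{M(s)}, where I(s) = {00,...,0s,1s,...,1n} and M(s) = {1i} if s = 0, M(s) = {0s,1i} if 0 < s < i, M(s) = {0i} if s = i, and M(s) = {0i,0s} if i < s ≤ n. -/

import Mathlib

/-!
A vertex of `σ(s)` is determined by its second coordinate unless that coordinate is `s` (the
pair `0s, 1s`), and `M(s)` consists of `0s` (if `s > 0`) and, if `i ≠ s`, the vertex of `σ(s)`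
over `i`. So missing a vertex of `σ(s) - M(s)` over some `k ≠ s` is the same as omitting the
coordinate `k ≠ i`, i.e. lying in `Ω(Δ^1 × Λ^n_i)`. The two remaining vertices of
`σ(s) - M(s)` account for the other parts: missing `1s` means lying in `σ(s+1)`, or in the
`0`-row when `s = n`; missing `00` when `s = 0` means lying in the `1`-row.
-/

/-- Vertices of `Δ^{[n]⋆[n]^op}` are identified with `Fin (2n+2)` via `0i ↦ i`,
`1i ↦ 2n+1-i`.  `sigmaV n r` is the vertex set of `σ(r) = Δ^{{00,…,0r,1r,…,1n}}`. -/
def sigmaV (n r : ℕ) : Finset (Fin (2 * n + 2)) :=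
  Finset.univ.filter fun v =>
    (v : ℕ) ≤ r ∨ (n + 1 ≤ (v : ℕ) ∧ (v : ℕ) ≤ 2 * n + 1 - r)

/-- The second coordinate of a vertex: `0r ↦ r` and `1r ↦ r`. -/
def coordV (n : ℕ) (v : Fin (2 * n + 2)) : ℕ :=
  if (v : ℕ) ≤ n then (v : ℕ) else 2 * n + 1 - (v : ℕ)

/-- A subset `S` spans a simplex of the subcomplex `Ω(Δ^1 × Λ^n_i ∪ ∂Δ^1 × Δ^n)` iff
either `S` lies in some `σ(r)` and its second coordinates omit some vertex `k ≠ i` of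
`[n]` (the `Δ^1 × Λ^n_i` part), or all vertices of `S` lie in the `0`-row or all in the
`1`-row (the `∂Δ^1 × Δ^n` part). -/
def memOmegaHornBd (n i : ℕ) (S : Finset (Fin (2 * n + 2))) : Prop :=
  ((∃ r ≤ n, S ⊆ sigmaV n r) ∧ ∃ k ≤ n, k ≠ i ∧ ∀ v ∈ S, coordV n v ≠ k) ∨
    (∀ v ∈ S, (v : ℕ) ≤ n) ∨ (∀ v ∈ S, n + 1 ≤ (v : ℕ))

/-- The vertex set `M(s)`: `{1i}` if `s = 0`; `{0s,1i}` if `0 < s < i`; `{0i}` if `s = i`;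
`{0i,0s}` if `i < s ≤ n`. -/
def MS (n i s : ℕ) : Finset (Fin (2 * n + 2)) :=
  if s = 0 then Finset.univ.filter fun v => (v : ℕ) = 2 * n + 1 - i
  else if s < i then Finset.univ.filter fun v => (v : ℕ) = s ∨ (v : ℕ) = 2 * n + 1 - i
  else if s = i then Finset.univ.filter fun v => (v : ℕ) = i
  else Finset.univ.filter fun v => (v : ℕ) = i ∨ (v : ℕ) = s

/-- A nonempty subset `S` spans a simplex of `Λ^I_J` iff `S ⊆ I` and `S` omits some
`m ∈ I - J`. -/
def hornMem {α : Type*} [DecidableEq α] (I J S : Finset α) : Prop :=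
  S ⊆ I ∧ ∃ m ∈ I \ J, m ∉ S

open Finset

section
variable {n i s : ℕ}

/-- The vertex `1k`. -/
def oneV (n k : ℕ) : Fin (2 * n + 2) := ⟨2 * n + 1 - k, by omega⟩

@[simp] lemma oneV_val (k : ℕ) : (oneV n k : ℕ) = 2 * n + 1 - k := rfl

@[simp] lemma mem_sigmaV {v : Fin (2 * n + 2)} :
    v ∈ sigmaV n s ↔ (v : ℕ) ≤ s ∨ n + 1 ≤ (v : ℕ) ∧ (v : ℕ) ≤ 2 * n + 1 - s := by
  simp [sigmaV]

lemma mem_MS {v : Fin (2 * n + 2)} :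
    v ∈ MS n i s ↔ if s = 0 then (v : ℕ) = 2 * n + 1 - i
      else if s < i then (v : ℕ) = s ∨ (v : ℕ) = 2 * n + 1 - i
      else if s = i then (v : ℕ) = i
      else (v : ℕ) = i ∨ (v : ℕ) = s := by
  unfold MS; split_ifs <;> simp

lemma coordV_le (v : Fin (2 * n + 2)) : coordV n v ≤ n := by
  unfold coordV; split_ifs <;> omega

lemma coordV_of_le {v : Fin (2 * n + 2)} (hv : (v : ℕ) ≤ n) : coordV n v = v := if_pos hv

lemma coordV_oneV {k : ℕ} (hk : k ≤ n) : coordV n (oneV n k) = k := by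
  rw [coordV, if_neg (by rw [oneV_val]; omega), oneV_val]
  omega

lemma eq_of_coordV_eq (hsn : s ≤ n) {v w : Fin (2 * n + 2)} (hv : v ∈ sigmaV n s)
    (hw : w ∈ sigmaV n s) (h : coordV n v = coordV n w) (hvs : coordV n v ≠ s) : v = w := by
  rw [mem_sigmaV] at hv hw
  unfold coordV at h hvs
  ext
  split_ifs at h hvs <;> omega

lemma exists_mem_sigmaV_sdiff_MS_coordV_eq (hin : i ≤ n) {k : ℕ} (hk : k ≤ n) (hki : k ≠ i) :
    ∃ m ∈ sigmaV n s \ MS n i s, coordV n m = k := by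
  by_cases hsk : s ≤ k
  · refine ⟨oneV n k, ?_, coordV_oneV hk⟩
    rw [mem_sdiff, mem_sigmaV, mem_MS, oneV_val]
    split_ifs <;> omega
  · refine ⟨⟨k, by omega⟩, ?_, coordV_of_le hk⟩
    rw [mem_sdiff, mem_sigmaV, mem_MS, Fin.val_mk]
    split_ifs <;> omega

lemma coordV_ne_of_mem_sigmaV_sdiff_MS (hsn : s ≤ n) {m : Fin (2 * n + 2)}
    (hm : m ∈ sigmaV n s \ MS n i s) (hms : coordV n m ≠ s) : coordV n m ≠ i := by
  rw [mem_sdiff, mem_sigmaV, mem_MS] at hm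
  unfold coordV at hms ⊢
  split_ifs at hm hms ⊢ <;> omega

lemma eq_zero_or_eq_oneV_of_coordV_eq {m : Fin (2 * n + 2)} (hm : m ∈ sigmaV n s \ MS n i s)
    (hms : coordV n m = s) : (s = 0 ∧ m = 0) ∨ m = oneV n s := by
  rw [mem_sdiff, mem_sigmaV, mem_MS] at hm
  unfold coordV at hms
  simp only [Fin.ext_iff, oneV_val, Fin.val_zero]
  split_ifs at hm hms <;> omega

lemma oneV_mem_sigmaV_sdiff_MS (hi : 0 < i) (hsn : s ≤ n) :
    oneV n s ∈ sigmaV n s \ MS n i s := by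
  rw [mem_sdiff, mem_sigmaV, mem_MS, oneV_val]
  split_ifs <;> omega

lemma zero_mem_sigmaV_sdiff_MS (hi : 0 < i) (hin : i ≤ n) : 0 ∈ sigmaV n s \ MS n i s := by
  rw [mem_sdiff, mem_sigmaV, mem_MS, Fin.val_zero]
  split_ifs <;> omega

lemma oneV_notMem_sigmaV {r : ℕ} (hsr : s < r) (hrn : r ≤ n) : oneV n s ∉ sigmaV n r := by
  rw [mem_sigmaV, oneV_val]
  omega

lemma mem_sigmaV_succ_of_ne_oneV {v : Fin (2 * n + 2)} (hv : v ∈ sigmaV n s)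
    (hne : v ≠ oneV n s) : v ∈ sigmaV n (s + 1) := by
  rw [mem_sigmaV] at hv ⊢
  rw [Ne, Fin.ext_iff, oneV_val] at hne
  omega

lemma val_le_of_mem_sigmaV_self_of_ne_oneV {v : Fin (2 * n + 2)} (hv : v ∈ sigmaV n n)
    (hne : v ≠ oneV n n) : (v : ℕ) ≤ n := by
  rw [mem_sigmaV] at hv
  rw [Ne, Fin.ext_iff, oneV_val] at hne
  omega

lemma le_val_of_mem_sigmaV_zero_of_ne_zero {v : Fin (2 * n + 2)} (hv : v ∈ sigmaV n 0)
    (hne : v ≠ 0) : n + 1 ≤ (v : ℕ) := by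
  rw [mem_sigmaV] at hv
  rw [Ne, Fin.ext_iff, Fin.val_zero] at hne
  omega

end

theorem sigma_inter_X_general (n i s : ℕ) (h0 : 0 < i) (hi : i < n) (hs : s ≤ n)
    (S : Finset (Fin (2 * n + 2))) :
    (S ⊆ sigmaV n s ∧
        (memOmegaHornBd n i S ∨ ∃ r, s < r ∧ r ≤ n ∧ S ⊆ sigmaV n r)) ↔
      hornMem (sigmaV n s) (MS n i s) S := by
  constructor
  · rintro ⟨hSs, (⟨-, k, hk, hki, hkS⟩ | hrow0 | hrow1) | ⟨r, hsr, hrn, hSr⟩⟩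
    · obtain ⟨m, hm, rfl⟩ := exists_mem_sigmaV_sdiff_MS_coordV_eq hi.le hk hki
      exact ⟨hSs, m, hm, fun hmS => hkS m hmS rfl⟩
    · exact ⟨hSs, _, oneV_mem_sigmaV_sdiff_MS h0 hs,
        fun h => absurd (hrow0 _ h) (by rw [oneV_val]; omega)⟩
    · exact ⟨hSs, _, zero_mem_sigmaV_sdiff_MS h0 hi.le, fun h => by simpa using hrow1 _ h⟩
    · exact ⟨hSs, _, oneV_mem_sigmaV_sdiff_MS h0 hs,
        fun h => oneV_notMem_sigmaV hsr hrn (hSr h)⟩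
  · rintro ⟨hSs, m, hm, hmS⟩
    refine ⟨hSs, ?_⟩
    by_cases hms : coordV n m = s
    · rcases eq_zero_or_eq_oneV_of_coordV_eq hm hms with ⟨rfl, rfl⟩ | rfl
      · exact Or.inl <| Or.inr <| Or.inr fun v hv =>
          le_val_of_mem_sigmaV_zero_of_ne_zero (hSs hv) (ne_of_mem_of_not_mem hv hmS)
      · rcases hs.lt_or_eq with hsn | rfl
        · exact Or.inr ⟨s + 1, s.lt_succ_self, hsn, fun v hv =>
            mem_sigmaV_succ_of_ne_oneV (hSs hv) (ne_of_mem_of_not_mem hv hmS)⟩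
        · exact Or.inl <| Or.inr <| Or.inl fun v hv =>
            val_le_of_mem_sigmaV_self_of_ne_oneV (hSs hv) (ne_of_mem_of_not_mem hv hmS)
    · refine Or.inl <| Or.inl ⟨⟨s, hs, hSs⟩, coordV n m, coordV_le m,
        coordV_ne_of_mem_sigmaV_sdiff_MS hs hm hms, fun v hv hvm => hmS ?_⟩
      rwa [eq_of_coordV_eq hs (hSs hv) (mem_sdiff.1 hm).1 hvm (hvm ▸ hms)] at hv

/-- For `0 < i < n` and `0 ≤ s ≤ n`, the intersection of the face `σ(s) = Δ^{I(s)}` with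
the subcomplex `Ω(Δ^1 × Λ^n_i ∪ ∂Δ^1 × Δ^n) ∪ ⋃_{s < r ≤ n} σ(r)` equals the generalized
horn `Λ^{I(s)}_{M(s)}` (as families of vertex sets of simplices). -/
theorem sigma_inter_X (n i s : ℕ) (h0 : 0 < i) (hi : i < n) (hs : s ≤ n)
    (S : Finset (Fin (2 * n + 2))) (hS : S.Nonempty) :
    (S ⊆ sigmaV n s ∧
        (memOmegaHornBd n i S ∨ ∃ r, s < r ∧ r ≤ n ∧ S ⊆ sigmaV n r)) ↔
      hornMem (sigmaV n s) (MS n i s) S :=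
  sigma_inter_X_general n i s h0 hi hs S
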